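/- arXiv:0906.3645 — 5 statements merged into one kernel-verified Lean document; each statement's English description precedes it below -/
import Mathlib

section
/- Let G be a group of nilpotency class at most 2 and let n be a natural number. Then the binary operation x ∘ₙ y := ⁅x,y⁆^n x y on G is associative: for all x, y, z in G, (x ∘ₙ y) ∘ₙ z = x ∘ₙ (y ∘ₙ z). -/
/-- The commutator `[x,y] = x⁻¹y⁻¹xy` as used in the paper. -/
def pcomm {G : Type*} [Group G] (x y : G) : G := x⁻¹ * y⁻¹ * x * y

/-- The operation `x ∘ₙ y := [x,y]^n x y` of the paper. -/
def opn {G : Type*} [Group G] (n : ℕ) (x y : G) : G := (pcomm x y) ^ n * x * y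

lemma commute_of_pcomm {G : Type*} [Group G] {a b : G} (h : pcomm a b = 1) :
    Commute a b := by
  unfold pcomm at h
  calc a * b = b * a * (a⁻¹ * b⁻¹ * a * b) := by group
  _ = b * a := by rw [h, mul_one]

lemma pcomm_of_commute {G : Type*} [Group G] {a b : G} (h : Commute a b) :
    pcomm a b = 1 := by
  unfold pcomm
  rw [mul_assoc, mul_assoc, h.eq]
  group

lemma pcomm_mul_left {G : Type*} [Group G]
    (C : ∀ a b c : G, Commute (pcomm a b) c) (a b c : G) :
    pcomm (a * b) c = pcomm a c * pcomm b c := by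
  have key : pcomm (a * b) c = b⁻¹ * pcomm a c * b * pcomm b c := by
    unfold pcomm; group
  rw [key, mul_assoc b⁻¹, (C a c b).eq, inv_mul_cancel_left]

lemma pcomm_mul_right {G : Type*} [Group G]
    (C : ∀ a b c : G, Commute (pcomm a b) c) (a b c : G) :
    pcomm a (b * c) = pcomm a b * pcomm a c := by
  have key : pcomm a (b * c) = pcomm a c * c⁻¹ * pcomm a b * c := by
    unfold pcomm; group
  rw [key, mul_assoc, mul_assoc, (C a b c).eq, inv_mul_cancel_left,
    ((C a b (pcomm a c)).eq)]

/-- In a group of nilpotency class at most 2, the operation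
`x ∘ₙ y := [x,y]^n x y` is associative. -/
theorem stmt_1 {G : Type*} [Group G]
    (hG : ∀ x y z : G, pcomm (pcomm x y) z = 1) (n : ℕ) (x y z : G) :
    opn n (opn n x y) z = opn n x (opn n y z) := by
  have C : ∀ a b c : G, Commute (pcomm a b) c := fun a b c =>
    commute_of_pcomm (hG a b c)
  have sw : ∀ (a b w : G), Commute a b → b * (a * w) = a * (b * w) := by
    intro a b w h
    rw [← mul_assoc, ← h.eq, mul_assoc]
  have h1 : pcomm (opn n x y) z = pcomm x z * pcomm y z := by
    rw [opn, pcomm_mul_left C, pcomm_mul_left C,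
      pcomm_of_commute ((C x y z).pow_left n), one_mul]
  have h2 : pcomm x (opn n y z) = pcomm x y * pcomm x z := by
    rw [opn, pcomm_mul_right C, pcomm_mul_right C,
      pcomm_of_commute (((C y z x).symm).pow_right n), one_mul]
  show (pcomm (opn n x y) z) ^ n * (opn n x y) * z
      = (pcomm x (opn n y z)) ^ n * x * (opn n y z)
  rw [h1, h2, opn, opn,
    (C x z (pcomm y z)).mul_pow, (C x y (pcomm x z)).mul_pow]
  simp only [mul_assoc]
  rw [sw (pcomm y z ^ n) x _ ((C y z x).pow_left n),
    sw (pcomm x y ^ n) (pcomm y z ^ n) _ ((C x y (pcomm y z)).pow_pow n n),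
    sw (pcomm x y ^ n) (pcomm x z ^ n) _ ((C x y (pcomm x z)).pow_pow n n)]
end

section
/- Let G be a group of nilpotency class at most 2 and let m, n be natural numbers. Then for all x, y in G, ⁅x,y⁆^{(2m+1)n} ∘ₘ (x ∘ₘ y) = x ∘_{(2m+1)n+m} y. (Since the ∘ₘ-commutator of x and y is ⁅x,y⁆^{2m+1} and its ∘ₘ-powers are ordinary powers, this says that applying the construction S_n to the group (G, ∘ₘ) yields the operation ∘_{(2m+1)n+m}; by induction, S_n^i(G) = S_{s(i)}(G) where s(i) = ((2n+1)^i − 1)/2.) -/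
/-! In class at most two the commutator `c = [x,y]` is central, so every power `c ^ k` commutes
with `x ∘ₘ y`; hence `c ^ k ∘ₘ (x ∘ₘ y) = c ^ k * c ^ m * x * y = x ∘_(k+m) y`. -/

section

open scoped commutatorElement

variable {G : Type*} [Group G]

theorem pcomm_eq_commutatorElement_inv (a b : G) : pcomm a b = ⁅a⁻¹, b⁻¹⁆ := by
  simp only [pcomm, commutatorElement_def, inv_inv]

theorem pcomm_eq_one_iff {a b : G} : pcomm a b = 1 ↔ Commute a b := by
  rw [pcomm_eq_commutatorElement_inv, commutatorElement_eq_one_iff_commute, Commute.inv_inv_iff]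

theorem opn_of_commute (m : ℕ) {a b : G} (h : Commute a b) : opn m a b = a * b := by
  rw [opn, pcomm_eq_one_iff.2 h, one_pow, one_mul]

end

/-- In a group of nilpotency class at most 2, for all `m n : ℕ` and
`x y : G`, `[x,y]^((2m+1)n) ∘ₘ (x ∘ₘ y) = x ∘_((2m+1)n+m) y`. -/
theorem stmt_6 {G : Type*} [Group G]
    (hG : ∀ x y z : G, pcomm (pcomm x y) z = 1) (m n : ℕ) (x y : G) :
    opn m ((pcomm x y) ^ ((2 * m + 1) * n)) (opn m x y) = opn ((2 * m + 1) * n + m) x y := by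
  have hcomm : Commute ((pcomm x y) ^ ((2 * m + 1) * n)) (opn m x y) :=
    (pcomm_eq_one_iff.1 (hG x y _)).pow_left _
  rw [opn_of_commute m hcomm, opn, opn, pow_add]
  simp only [mul_assoc]
end

section
/- Let p be an odd prime and let G be a finite group of order p^k and nilpotency class 2 whose commutator subgroup has exponent p^t. Then for every natural number i with i < t, the set {x ∈ G | x^{p^i} ∈ Z(G)} is strictly contained in the set {x ∈ G | x^{p^{i+1}} ∈ Z(G)}. (These sets are the centers of the groups S_n^i(G) and S_n^{i+1}(G) with n = (p−1)/2; hence no two terms of the string of G are isomorphic.) -/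
open scoped commutatorElement

/-!
In class two, `a ↦ ⁅a, b⁆` is a homomorphism, so `a ^ m` is central exactly when `⁅a, b⁆ ^ m = 1`
for all `b`, and the exponent `p ^ t` of `⁅G, G⁆` is already the exponent of the set of
commutators. Choosing `a, b` with `⁅a, b⁆ ^ p ^ (t - 1) ≠ 1`, the element `a ^ p ^ (t - 1 - i)`
lies in the `(i + 1)`-st set but not in the `i`-th one.
-/

open Subgroup

theorem mem_center_iff_forall_commutatorElement_eq_one {G : Type*} [Group G] {g : G} :
    g ∈ center G ↔ ∀ b : G, ⁅g, b⁆ = 1 := by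
  simp only [mem_center_iff, commutatorElement_eq_one_iff_mul_comm, eq_comm]

theorem commutatorElement_mem_commutator {G : Type*} [Group G] (a b : G) :
    ⁅a, b⁆ ∈ commutator G := by
  rw [commutator_def]
  exact commutator_mem_commutator (mem_top a) (mem_top b)

section ClassTwo

variable {G : Type*} [Group G] (hG : commutator G ≤ center G)
include hG

theorem commutatorElement_pow_left (a b : G) (m : ℕ) : ⁅a ^ m, b⁆ = ⁅a, b⁆ ^ m := by
  induction m with
  | zero => simp
  | succ n ih =>
    have hcentral : a * ⁅a ^ n, b⁆ * a⁻¹ = ⁅a ^ n, b⁆ := by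
      rw [mem_center_iff.mp (hG (commutatorElement_mem_commutator _ _)) a, mul_inv_cancel_right]
    rw [pow_succ', commutatorElement_mul_left_eq_conj_mul, hcentral, ih, pow_succ]

theorem pow_mem_center_iff (a : G) (m : ℕ) : a ^ m ∈ center G ↔ ∀ b : G, ⁅a, b⁆ ^ m = 1 := by
  simp only [mem_center_iff_forall_commutatorElement_eq_one, commutatorElement_pow_left hG]

theorem exponent_commutator_dvd_iff (n : ℕ) :
    Monoid.exponent (commutator G) ∣ n ↔ ∀ a b : G, ⁅a, b⁆ ^ n = 1 := by
  refine ⟨fun h a b ↦ ?_, fun h ↦ Monoid.exponent_dvd_of_forall_pow_eq_one fun c ↦ ?_⟩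
  · simpa using congrArg Subtype.val
      (Monoid.exponent_dvd_iff_forall_pow_eq_one.mp h ⟨_, commutatorElement_mem_commutator a b⟩)
  · obtain ⟨c, hc⟩ := c
    ext
    simp only [SubgroupClass.coe_pow, OneMemClass.coe_one]
    rw [commutator_eq_closure] at hc
    induction hc using closure_induction with
    | mem x hx =>
      obtain ⟨a, b, rfl⟩ := hx
      exact h a b
    | one => exact one_pow n
    | mul x y hx _ ihx ihy =>
      have hx' : x ∈ center G := hG (by rwa [commutator_eq_closure])
      rw [Commute.mul_pow (mem_center_iff.mp hx' y).symm, ihx, ihy, one_mul]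
    | inv x _ ihx => rw [inv_pow, ihx, inv_one]

end ClassTwo

theorem stmt_10_general {G : Type*} [Group G]
    (p t : ℕ) (hp : p.Prime)
    (hclass : commutator G ≤ Subgroup.center G)
    (hexp : Monoid.exponent ↥(commutator G) = p ^ t)
    (i : ℕ) (hi : i < t) :
    {x : G | x ^ (p ^ i) ∈ Subgroup.center G} ⊂
      {x : G | x ^ (p ^ (i + 1)) ∈ Subgroup.center G} := by
  have hkill : ∀ a b : G, ⁅a, b⁆ ^ p ^ t = 1 :=
    (exponent_commutator_dvd_iff hclass _).mp hexp.dvd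
  obtain ⟨a, b, hab⟩ : ∃ a b : G, ⁅a, b⁆ ^ p ^ (t - 1) ≠ 1 := by
    by_contra! h
    have := (exponent_commutator_dvd_iff hclass _).mpr h
    rw [hexp, Nat.pow_dvd_pow_iff_le_right hp.one_lt] at this
    omega
  refine Set.ssubset_iff_of_subset (fun x hx ↦ ?_) |>.mpr ⟨a ^ p ^ (t - 1 - i), ?_, ?_⟩
  · simpa only [Set.mem_ofPred_eq, pow_succ, pow_mul] using pow_mem hx p
  · rw [Set.mem_ofPred_eq, ← pow_mul, ← pow_add, show t - 1 - i + (i + 1) = t by omega,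
      pow_mem_center_iff hclass]
    exact hkill a
  · rw [Set.mem_ofPred_eq, ← pow_mul, ← pow_add, show t - 1 - i + i = t - 1 by omega,
      pow_mem_center_iff hclass]
    exact fun h ↦ hab (h b)

/-- Let `p` be an odd prime and `G` a finite group of order `p^k` and
nilpotency class 2 (nonabelian with commutator subgroup contained in the center) whose
commutator subgroup has exponent `p^t`. Then for every `i < t`, the set
`{x | x^(p^i) ∈ Z(G)}` is strictly contained in `{x | x^(p^(i+1)) ∈ Z(G)}`. -/
theorem stmt_10 {G : Type*} [Group G] [Finite G]
    (p k t : ℕ) (hp : p.Prime) (hodd : Odd p)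
    (hcard : Nat.card G = p ^ k)
    (hclass : commutator G ≤ Subgroup.center G)
    (hnonab : commutator G ≠ ⊥)
    (hexp : Monoid.exponent ↥(commutator G) = p ^ t)
    (i : ℕ) (hi : i < t) :
    {x : G | x ^ (p ^ i) ∈ Subgroup.center G} ⊂
      {x : G | x ^ (p ^ (i + 1)) ∈ Subgroup.center G} :=
  stmt_10_general p t hp hclass hexp i hi
end

section
/- Let G be a group of nilpotency class at most 2, let e be an odd natural number such that ⁅x,y⁆^e = 1 for all x, y in G (e.g., e is the exponent of the commutator subgroup), and set s = (e−1)/2. Then the operation ∘ₛ is commutative: for all x, y in G, ⁅x,y⁆^s x y = ⁅y,x⁆^s y x. (In particular, for a finite p-group G of class 2 with odd p and commutator subgroup of exponent p^t, the last term S_n^t(G) of the string of G, with n = (p−1)/2, is an abelian group.) -/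
/-- Let `G` be a group of nilpotency class at most 2 and `e` an odd
natural number with `[x,y]^e = 1` for all `x y`. With `s = (e-1)/2`, the operation
`∘ₛ` is commutative: `[x,y]^s x y = [y,x]^s y x` for all `x, y`. -/
theorem stmt_12 {G : Type*} [Group G]
    (hG : ∀ x y z : G, pcomm (pcomm x y) z = 1)
    (e : ℕ) (he : Odd e) (hexp : ∀ x y : G, (pcomm x y) ^ e = 1) (x y : G) :
    (pcomm x y) ^ ((e - 1) / 2) * x * y = (pcomm y x) ^ ((e - 1) / 2) * y * x := by
  obtain ⟨s, hs⟩ := he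
  set c := pcomm x y with hc
  -- c is central
  have hcent : ∀ z : G, c * z = z * c := by
    intro z
    have h := hG x y z
    rw [pcomm] at h
    have h1 : c⁻¹ * z⁻¹ * c * z = 1 := h
    have h2 : z⁻¹ * c * z = c := by
      calc z⁻¹ * c * z = c * (c⁻¹ * z⁻¹ * c * z) := by group
        _ = c := by rw [h1]; group
    calc c * z = z * (z⁻¹ * c * z) := by group
      _ = z * c := by rw [h2]
  have hinv : pcomm y x = c⁻¹ := by rw [hc, pcomm, pcomm]; group
  have hyx : y * x = x * y * c⁻¹ := by rw [hc, pcomm]; group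
  have hcomm_inv : ∀ z : G, c⁻¹ * z = z * c⁻¹ := by
    intro z
    have := hcent z
    calc c⁻¹ * z = c⁻¹ * (z * c) * c⁻¹ := by group
      _ = c⁻¹ * (c * z) * c⁻¹ := by rw [this]
      _ = z * c⁻¹ := by group
  have hsdiv : (e - 1) / 2 = s := by omega
  rw [hsdiv, hinv]
  conv_rhs => rw [mul_assoc, hyx]
  have hce : c ^ e = 1 := hexp x y
  have key : c ^ s = (c ^ (s + 1))⁻¹ := by
    rw [eq_inv_iff_mul_eq_one, ← pow_add]
    rw [show s + (s + 1) = e by omega]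
    exact hce
  calc c ^ s * x * y = (c ^ (s + 1))⁻¹ * (x * y) := by rw [key]; group
    _ = (c ^ s)⁻¹ * (c⁻¹ * (x * y)) := by rw [pow_succ]; group
    _ = (c ^ s)⁻¹ * (x * y * c⁻¹) := by rw [hcomm_inv]
    _ = c⁻¹ ^ s * (x * y * c⁻¹) := by rw [inv_pow]
    _ = c⁻¹ ^ s * (x * y * c⁻¹) * c⁻¹ * c := by group
    _ = c⁻¹ ^ s * (x * y * c⁻¹) * c * c⁻¹ := by
        rw [mul_assoc _ c⁻¹ c, mul_assoc _ c c⁻¹, hcomm_inv c]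
    _ = c⁻¹ ^ s * (x * y * c⁻¹) := by group
end

section
/- Two finite abelian groups are isomorphic if and only if they have the same order structure; precisely, if G and H are finite abelian groups such that for every natural number n the number of elements of order n in G equals the number of elements of order n in H, then G and H are isomorphic. -/
/-!
By the structure theorem, `G` and `H` are products of cyclic groups `ℤ/q_i` and `ℤ/r_j` of
prime-power orders. Grouping elements by their order over the divisors of `n` shows that `G` and
`H` have the same number of solutions of `x ^ n = 1`, and in `∏ ℤ/q_i` that number is
`∏ gcd(q_i, n)`. For `n = p ^ k` its `p`-adic valuation is `S(k) = ∑ min(v_p(q_i), k)`, and the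
second difference `2 S(k+1) - S(k) - S(k+2)` is the number of factors of order exactly `p^(k+1)`.
Hence the two families of orders agree up to reindexing, and so do the products.
-/

theorem card_pow_eq_one_eq_of_card_orderOf_eq {G H : Type*} [Group G] [Group H] [Finite G]
    [Finite H]
    (h : ∀ n : ℕ, Nat.card {x : G // orderOf x = n} = Nat.card {x : H // orderOf x = n})
    {n : ℕ} (hn : n ≠ 0) : Nat.card {x : G // x ^ n = 1} = Nat.card {x : H // x ^ n = 1} := by
  classical
  cases nonempty_fintype G
  cases nonempty_fintype H
  simp only [Nat.card_eq_fintype_card, Fintype.card_subtype] at h ⊢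
  convert (sum_card_orderOf_eq_card_pow_eq_one hn).symm.trans
    ((Finset.sum_congr rfl fun m _ => h m).trans (sum_card_orderOf_eq_card_pow_eq_one hn))

theorem card_nsmul_eq_zero_pi_zmod {ι : Type*} [Fintype ι] (q : ι → ℕ) [∀ i, NeZero (q i)]
    (n : ℕ) : Nat.card {x : ∀ i, ZMod (q i) // n • x = 0} = ∏ i, (q i).gcd n := by
  have e : {x : ∀ i, ZMod (q i) // n • x = 0} ≃ ∀ i, {y : ZMod (q i) // n • y = 0} :=
    (Equiv.subtypeEquivRight fun x => by simp [funext_iff]).trans Equiv.subtypePiEquivPi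
  rw [Nat.card_congr e, Nat.card_pi]
  refine Fintype.prod_congr _ _ fun i => ?_
  exact (IsAddCyclic.card_nsmulAddMonoidHom_ker (ZMod (q i)) n).trans (by rw [Nat.card_zmod])

theorem card_pow_eq_one_of_addEquiv_pi_zmod {G : Type*} [CommGroup G] {ι : Type*} [Fintype ι]
    {q : ι → ℕ} [∀ i, NeZero (q i)] (e : Additive G ≃+ ∀ i, ZMod (q i)) (n : ℕ) :
    Nat.card {x : G // x ^ n = 1} = ∏ i, (q i).gcd n := by
  rw [← card_nsmul_eq_zero_pi_zmod]
  refine Nat.card_congr ((Additive.ofMul.trans e.toEquiv).subtypeEquiv fun x => ?_)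
  rw [Equiv.trans_apply, AddEquiv.toEquiv_eq_coe, AddEquiv.coe_toEquiv, ← map_nsmul,
    AddEquivClass.map_eq_zero_iff, ← ofMul_pow]
  exact ofMul_eq_zero.symm

theorem AddCommGroup.exists_addEquiv_pi_zmod_isPrimePow (G : Type*) [AddCommGroup G] [Finite G] :
    ∃ (ι : Type) (_ : Fintype ι) (q : ι → ℕ), (∀ i, IsPrimePow (q i)) ∧
      Nonempty (G ≃+ ∀ i, ZMod (q i)) := by
  classical
  obtain ⟨ι, _, p, hp, e, ⟨f⟩⟩ := AddCommGroup.equiv_directSum_zmod_of_finite G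
  have : Unique (∀ i : {i // ¬ e i ≠ 0}, ZMod (p i ^ e i)) :=
    @Pi.unique _ _ fun i => by rw [not_not.mp i.2, pow_zero]; infer_instance
  refine ⟨{i // e i ≠ 0}, inferInstance, fun i => p i ^ e i,
    fun i => ⟨p i, e i, (hp i).prime, Nat.pos_of_ne_zero i.2, rfl⟩, ⟨?_⟩⟩
  exact f.trans <| (DirectSum.addEquivProd _).trans <|
    (RingEquiv.piEquivPiSubtypeProd (fun i => e i ≠ 0) _).toAddEquiv.trans AddEquiv.prodUnique

theorem Nat.factorization_prod_gcd_prime_pow {ι : Type*} [Fintype ι] {q : ι → ℕ}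
    (hq : ∀ i, q i ≠ 0) {p : ℕ} (hp : p.Prime) (k : ℕ) :
    (∏ i, (q i).gcd (p ^ k)).factorization p = ∑ i, min ((q i).factorization p) k := by
  rw [Nat.factorization_prod fun i _ => Nat.gcd_ne_zero_left (hq i), Finset.sum_apply']
  refine Fintype.sum_congr _ _ fun i => ?_
  rw [Nat.factorization_gcd (hq i) (pow_ne_zero k hp.ne_zero), Finsupp.inf_apply,
    hp.factorization_pow, Finsupp.single_eq_same]

theorem IsPrimePow.ite_eq_prime_pow_add_min {q p : ℕ} (hq : IsPrimePow q) (hp : p.Prime)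
    (k : ℕ) :
    (if q = p ^ (k + 1) then 1 else 0) + min (q.factorization p) k
      + min (q.factorization p) (k + 2) = 2 * min (q.factorization p) (k + 1) := by
  obtain ⟨r, e, hr, -, rfl⟩ := hq
  rw [← Nat.prime_iff] at hr
  rw [hr.factorization_pow, Finsupp.single_apply]
  by_cases hrp : r = p
  · subst hrp
    simp only [pow_right_inj₀ hr.pos hr.one_lt.ne']
    split_ifs <;> omega
  · have hne : r ^ e ≠ p ^ (k + 1) := fun h => by
      simpa [hr.factorization_pow, hp.factorization_pow, Finsupp.single_apply, hrp]
        using congrArg (·.factorization p) h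
    simp only [if_neg hrp, if_neg hne]
    omega

theorem card_fiber_prime_pow_succ_add {ι : Type*} [Fintype ι] {q : ι → ℕ}
    (hq : ∀ i, IsPrimePow (q i)) {p : ℕ} (hp : p.Prime) (k : ℕ) :
    Fintype.card {i // q i = p ^ (k + 1)} + (∏ i, (q i).gcd (p ^ k)).factorization p
      + (∏ i, (q i).gcd (p ^ (k + 2))).factorization p
      = 2 * (∏ i, (q i).gcd (p ^ (k + 1))).factorization p := by
  classical
  have hq0 i := (hq i).ne_zero
  simp only [Nat.factorization_prod_gcd_prime_pow hq0 hp, Fintype.card_subtype,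
    Finset.card_filter, Finset.mul_sum, ← Finset.sum_add_distrib]
  exact Fintype.sum_congr _ _ fun i => (hq i).ite_eq_prime_pow_add_min hp k

theorem card_fiber_eq_of_prod_gcd_eq {ι κ : Type*} [Fintype ι] [Fintype κ] {q : ι → ℕ}
    {r : κ → ℕ} (hq : ∀ i, IsPrimePow (q i)) (hr : ∀ j, IsPrimePow (r j))
    (h : ∀ n ≠ 0, ∏ i, (q i).gcd n = ∏ j, (r j).gcd n) (c : ℕ) :
    Fintype.card {i // q i = c} = Fintype.card {j // r j = c} := by
  by_cases hc : IsPrimePow c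
  · obtain ⟨p, m, hp, hm, rfl⟩ := hc
    rw [← Nat.prime_iff] at hp
    obtain ⟨k, rfl⟩ : ∃ k, m = k + 1 := ⟨m - 1, by omega⟩
    have hG := card_fiber_prime_pow_succ_add hq hp k
    have hH := card_fiber_prime_pow_succ_add hr hp k
    simp only [h _ (pow_ne_zero _ hp.ne_zero)] at hG
    omega
  · rw [Fintype.card_eq_zero_iff.mpr ⟨fun i : {i // q i = c} => hc (i.2 ▸ hq i)⟩,
      Fintype.card_eq_zero_iff.mpr ⟨fun j : {j // r j = c} => hc (j.2 ▸ hr j)⟩]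

theorem nonempty_addEquiv_pi_zmod_of_card_fiber_eq {ι κ : Type*} [Fintype ι] [Fintype κ]
    {q : ι → ℕ} {r : κ → ℕ}
    (h : ∀ c, Fintype.card {i // q i = c} = Fintype.card {j // r j = c}) :
    Nonempty ((∀ i, ZMod (q i)) ≃+ ∀ j, ZMod (r j)) := by
  obtain ⟨σ, rfl⟩ : ∃ σ : ι ≃ κ, r ∘ σ = q :=
    ⟨_, funext (Equiv.ofFiberEquiv_map fun c => Fintype.equivOfCardEq (h c))⟩
  exact ⟨(RingEquiv.piCongrLeft (fun j => ZMod (r j)) σ).toAddEquiv⟩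

/-- Two finite abelian groups with the same order structure (i.e., the
same number of elements of each order) are isomorphic. -/
theorem stmt_13 {G H : Type*} [CommGroup G] [CommGroup H] [Finite G] [Finite H]
    (h : ∀ n : ℕ, Nat.card {x : G // orderOf x = n} = Nat.card {x : H // orderOf x = n}) :
    Nonempty (G ≃* H) := by
  obtain ⟨ι, _, q, hq, ⟨eG⟩⟩ := AddCommGroup.exists_addEquiv_pi_zmod_isPrimePow (Additive G)
  obtain ⟨κ, _, r, hr, ⟨eH⟩⟩ := AddCommGroup.exists_addEquiv_pi_zmod_isPrimePow (Additive H)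
  have : ∀ i, NeZero (q i) := fun i => ⟨(hq i).ne_zero⟩
  have : ∀ j, NeZero (r j) := fun j => ⟨(hr j).ne_zero⟩
  have hgcd (n : ℕ) (hn : n ≠ 0) : ∏ i, (q i).gcd n = ∏ j, (r j).gcd n := by
    rw [← card_pow_eq_one_of_addEquiv_pi_zmod eG, ← card_pow_eq_one_of_addEquiv_pi_zmod eH,
      card_pow_eq_one_eq_of_card_orderOf_eq h hn]
  obtain ⟨e⟩ :=
    nonempty_addEquiv_pi_zmod_of_card_fiber_eq (card_fiber_eq_of_prod_gcd_eq hq hr hgcd)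
  exact ⟨MulEquiv.toAdditive.symm (eG.trans (e.trans eH.symm))⟩
end
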